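/- arXiv:1309.5865 — 5 statements merged into one kernel-verified Lean document; each statement's English description precedes it below -/
import Mathlib

section
/- The double integral J(t) = ∫₀^∞ ∫₀^∞ dx dy / ((1+x+y)(x+y+xy) − t·xy) converges for every real t < 9. -/
open MeasureTheory Set

lemma sunset_f_integrable :
    IntegrableOn (fun x : ℝ => 1 / (Real.sqrt x * (1 + x))) (Ioi 0) := by
  have h1 : IntegrableOn (fun x : ℝ => 1 / (Real.sqrt x * (1 + x))) (Ioc 0 1) := by
    have hi : IntegrableOn (fun x : ℝ => x ^ (-(1 : ℝ) / 2)) (Ioc 0 1) := by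
      have := intervalIntegral.intervalIntegrable_rpow' (a := 0) (b := 1)
        (r := -(1 : ℝ) / 2) (by norm_num)
      rwa [intervalIntegrable_iff_integrableOn_Ioc_of_le (by norm_num)] at this
    apply hi.mono'
    · apply Measurable.aestronglyMeasurable
      fun_prop
    · filter_upwards [ae_restrict_mem measurableSet_Ioc] with x hx
      have hx0 : 0 < x := hx.1
      have hs : 0 < Real.sqrt x := Real.sqrt_pos.2 hx0
      rw [Real.norm_eq_abs, abs_of_nonneg (by positivity)]
      have hrw : x ^ (-(1 : ℝ) / 2) = 1 / (Real.sqrt x * 1) := by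
        rw [mul_one, show (-(1 : ℝ) / 2) = -(1 / 2) by ring, Real.rpow_neg hx0.le,
          ← Real.sqrt_eq_rpow, one_div]
      rw [hrw]
      exact one_div_le_one_div_of_le (by positivity) (by nlinarith)
  have h2 : IntegrableOn (fun x : ℝ => 1 / (Real.sqrt x * (1 + x))) (Ioi 1) := by
    have hi : IntegrableOn (fun x : ℝ => x ^ (-(3 : ℝ) / 2)) (Ioi 1) :=
      integrableOn_Ioi_rpow_of_lt (by norm_num) one_pos
    apply hi.mono'
    · apply Measurable.aestronglyMeasurable
      fun_prop
    · filter_upwards [ae_restrict_mem measurableSet_Ioi] with x hx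
      have hx0 : (0 : ℝ) < x := lt_trans one_pos hx
      have hs : 0 < Real.sqrt x := Real.sqrt_pos.2 hx0
      rw [Real.norm_eq_abs, abs_of_nonneg (by positivity)]
      have hrw : x ^ (-(3 : ℝ) / 2) = 1 / (Real.sqrt x * x) := by
        rw [show (-(3 : ℝ) / 2) = -(1 / 2 + 1) by ring, Real.rpow_neg hx0.le,
          Real.rpow_add hx0, Real.rpow_one, ← Real.sqrt_eq_rpow, one_div]
      rw [hrw]
      exact one_div_le_one_div_of_le (by positivity) (by nlinarith)
  have hU : Ioi (0 : ℝ) = Ioc 0 1 ∪ Ioi 1 := (Ioc_union_Ioi_eq_Ioi (by norm_num)).symm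
  rw [hU]
  exact h1.union h2

lemma sunset_key (t : ℝ) (ht : t < 9) {x y : ℝ} (hx : 0 < x) (hy : 0 < y) :
    min 1 ((9 - t) / 9) * (Real.sqrt x * (1 + x) * (Real.sqrt y * (1 + y))) ≤
      (1 + x + y) * (x + y + x * y) - t * (x * y) := by
  set a := Real.sqrt x with ha'
  set b := Real.sqrt y with hb'
  have ha : 0 < a := Real.sqrt_pos.2 hx
  have hb : 0 < b := Real.sqrt_pos.2 hy
  have hax : a ^ 2 = x := Real.sq_sqrt hx.le
  have hby : b ^ 2 = y := Real.sq_sqrt hy.le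
  rw [← hax, ← hby]
  have hP9 : 9 * (a ^ 2 * b ^ 2) ≤ (1 + a ^ 2 + b ^ 2) * (a ^ 2 + b ^ 2 + a ^ 2 * b ^ 2) := by
    nlinarith [mul_nonneg (sq_nonneg a) (sq_nonneg (b ^ 2 - 1)),
      mul_nonneg (sq_nonneg b) (sq_nonneg (a ^ 2 - 1)), sq_nonneg (a ^ 2 - b ^ 2)]
  have hPab : a * b * ((1 + a ^ 2) * (1 + b ^ 2)) ≤
      (1 + a ^ 2 + b ^ 2) * (a ^ 2 + b ^ 2 + a ^ 2 * b ^ 2) := by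
    nlinarith [mul_nonneg (sq_nonneg (a - b)) (by positivity : (0 : ℝ) ≤ (1 + a ^ 2) * (1 + b ^ 2)),
      mul_pos ha hb, sq_nonneg (a * b), mul_pos (mul_pos ha hb) (mul_pos ha hb)]
  have hX : 0 < a * b * ((1 + a ^ 2) * (1 + b ^ 2)) := by positivity
  rcases le_or_gt t 0 with h | h
  · have hmin : min 1 ((9 - t) / 9) ≤ 1 := min_le_left _ _
    have htp : 0 ≤ -t * (a ^ 2 * b ^ 2) :=
      mul_nonneg (neg_nonneg.2 h) (by positivity)
    nlinarith [mul_le_mul_of_nonneg_right hmin hX.le, hPab, htp]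
  · have hmin : min 1 ((9 - t) / 9) ≤ (9 - t) / 9 := min_le_right _ _
    have h1 : min 1 ((9 - t) / 9) * (a * (1 + a ^ 2) * (b * (1 + b ^ 2))) ≤
        (9 - t) / 9 * (a * b * ((1 + a ^ 2) * (1 + b ^ 2))) := by
      nlinarith [mul_le_mul_of_nonneg_right hmin hX.le]
    nlinarith [mul_le_mul_of_nonneg_left hPab (by linarith : (0 : ℝ) ≤ (9 - t) / 9),
      mul_le_mul_of_nonneg_left hP9 (by linarith : (0 : ℝ) ≤ t / 9)]

theorem sunset_integral_convergent (t : ℝ) (ht : t < 9) :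
    IntegrableOn
      (fun p : ℝ × ℝ =>
        1 / ((1 + p.1 + p.2) * (p.1 + p.2 + p.1 * p.2) - t * (p.1 * p.2)))
      (Ioi (0 : ℝ) ×ˢ Ioi (0 : ℝ)) := by
  set c := min 1 ((9 - t) / 9) with hc
  have hc0 : 0 < c := lt_min one_pos (by linarith)
  have hprod : IntegrableOn
      (fun p : ℝ × ℝ => c⁻¹ * (1 / (Real.sqrt p.1 * (1 + p.1)) *
        (1 / (Real.sqrt p.2 * (1 + p.2))))) (Ioi (0 : ℝ) ×ˢ Ioi (0 : ℝ)) := by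
    apply Integrable.const_mul
    have h := sunset_f_integrable.mul_prod sunset_f_integrable
    rw [Measure.prod_restrict, ← Measure.volume_eq_prod] at h
    exact h
  apply hprod.mono'
  · apply Measurable.aestronglyMeasurable
    fun_prop
  · filter_upwards [ae_restrict_mem ((measurableSet_Ioi).prod measurableSet_Ioi)] with p hp
    obtain ⟨hx, hy⟩ := hp
    simp only [mem_Ioi] at hx hy
    have hkey := sunset_key t ht hx hy
    have hXpos : 0 < c * (Real.sqrt p.1 * (1 + p.1) * (Real.sqrt p.2 * (1 + p.2))) := by
      have h1 : 0 < Real.sqrt p.1 := Real.sqrt_pos.2 hx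
      have h2 : 0 < Real.sqrt p.2 := Real.sqrt_pos.2 hy
      positivity
    have hApos : 0 < (1 + p.1 + p.2) * (p.1 + p.2 + p.1 * p.2) - t * (p.1 * p.2) :=
      lt_of_lt_of_le hXpos hkey
    rw [Real.norm_eq_abs, abs_of_nonneg (by positivity)]
    calc 1 / ((1 + p.1 + p.2) * (p.1 + p.2 + p.1 * p.2) - t * (p.1 * p.2)) ≤
        1 / (c * (Real.sqrt p.1 * (1 + p.1) * (Real.sqrt p.2 * (1 + p.2)))) :=
          one_div_le_one_div_of_le hXpos hkey
      _ = c⁻¹ * (1 / (Real.sqrt p.1 * (1 + p.1)) * (1 / (Real.sqrt p.2 * (1 + p.2)))) := by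
          rw [one_div, mul_inv, mul_inv, one_div, one_div]
end

section
/- The double integral ∫₀^∞ ∫₀^∞ dx dy / ((x+1)(y+1)(x+y)) equals π²/4. -/
/-!
Integrating out `y` first, `∫₀^∞ dy / ((y + 1)(y + x)) = log x / (x - 1)`, so the integral is
`∫₀^∞ log x / (x² - 1) dx`. The substitution `x ↦ 1/x` maps the part over `(1, ∞)` onto the part
over `(0, 1)`, and there `log x / (x² - 1) = ∑ₙ (-log x) x²ⁿ` with `∫₀¹ (-log x) x²ⁿ dx = 1/(2n+1)²`;
the sum of these is `π²/8` by `ζ(2) = π²/6`. Since everything is nonnegative, one can work with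
lower Lebesgue integrals throughout, where Tonelli and termwise integration need no integrability.
-/

open MeasureTheory Set Real Filter Topology
open scoped ENNReal

theorem lintegral_Ioi_one_div_add_mul_add {a b : ℝ} (ha : 0 < a) (hb : 0 < b) (hab : a ≠ b) :
    ∫⁻ y in Ioi 0, ENNReal.ofReal (1 / ((y + a) * (y + b))) =
      ENNReal.ofReal ((log a - log b) / (a - b)) := by
  have hab' : a - b ≠ 0 := sub_ne_zero.mpr hab
  set g : ℝ → ℝ := fun y => (log (y + b) - log (y + a)) / (a - b)
  have hderiv : ∀ y ∈ Ici (0 : ℝ), HasDerivAt g (1 / ((y + a) * (y + b))) y := by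
    intro y (hy : 0 ≤ y)
    have hya : y + a ≠ 0 := by positivity
    have hyb : y + b ≠ 0 := by positivity
    refine (((((hasDerivAt_id' y).add_const b).log hyb).sub
      (((hasDerivAt_id' y).add_const a).log hya)).div_const (a - b)).congr_deriv ?_
    field_simp
    ring
  have hnonneg : ∀ y ∈ Ioi (0 : ℝ), 0 ≤ 1 / ((y + a) * (y + b)) :=
    fun y (hy : 0 < y) => by positivity
  have hlim : Tendsto g atTop (𝓝 0) := by
    have := ((tendsto_log_comp_add_sub_log b).sub (tendsto_log_comp_add_sub_log a)).div_const
      (a - b)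
    rw [sub_zero, zero_div] at this
    refine this.congr' (eventually_gt_atTop 0 |>.mono fun y _ => ?_)
    simp only [g]
    ring
  rw [← ofReal_integral_eq_lintegral_ofReal (integrableOn_Ioi_deriv_of_nonneg' hderiv hnonneg hlim)
      (ae_restrict_of_forall_mem measurableSet_Ioi hnonneg),
    integral_Ioi_of_hasDerivAt_of_nonneg' hderiv hnonneg hlim]
  congr 1
  simp only [g, zero_add]
  ring

theorem lintegral_Ioi_sunset_inner {x : ℝ} (hx : 0 < x) (hx1 : x ≠ 1) :
    ∫⁻ y in Ioi 0, ENNReal.ofReal (1 / ((x + 1) * (y + 1) * (x + y))) =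
      ENNReal.ofReal (log x / (x ^ 2 - 1)) := by
  have hsplit : ∀ y ∈ Ioi (0 : ℝ), ENNReal.ofReal (1 / ((x + 1) * (y + 1) * (x + y))) =
      ENNReal.ofReal (1 / (x + 1)) * ENNReal.ofReal (1 / ((y + 1) * (y + x))) := fun y _ => by
    rw [← ENNReal.ofReal_mul (by positivity), one_div_mul_one_div, mul_assoc, add_comm x y]
  rw [setLIntegral_congr_fun measurableSet_Ioi hsplit, lintegral_const_mul _ (by fun_prop),
    lintegral_Ioi_one_div_add_mul_add one_pos hx hx1.symm, ← ENNReal.ofReal_mul (by positivity),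
    log_one]
  have h₁ : 1 - x ≠ 0 := sub_ne_zero.mpr hx1.symm
  have h₂ : x ^ 2 - 1 ≠ 0 :=
    sub_ne_zero.mpr fun h => hx1 ((pow_eq_one_iff_of_nonneg hx.le two_ne_zero).mp h)
  congr 1
  field_simp
  ring

theorem hasSum_one_div_odd_sq : HasSum (fun n : ℕ => 1 / (2 * (n : ℝ) + 1) ^ 2) (π ^ 2 / 8) := by
  have hinj : Function.Injective (fun n : ℕ => 2 * n + 1) := fun a b h => by simp_all
  have heven : HasSum (fun n : ℕ => 1 / ((2 * n : ℕ) : ℝ) ^ 2) (π ^ 2 / 24) := by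
    have h := hasSum_zeta_two.mul_left (1 / 4)
    rwa [show 1 / 4 * (π ^ 2 / 6) = π ^ 2 / 24 by ring,
      show (fun n : ℕ => 1 / 4 * (1 / (n : ℝ) ^ 2)) = fun n : ℕ => 1 / ((2 * n : ℕ) : ℝ) ^ 2 by
        ext n; push_cast; ring] at h
  obtain ⟨S, hS⟩ := hasSum_zeta_two.summable.comp_injective hinj
  obtain rfl : S = π ^ 2 / 8 := by
    have := (heven.even_add_odd (f := fun m : ℕ => (1 : ℝ) / (m : ℝ) ^ 2) hS).unique hasSum_zeta_two
    linarith
  simpa [Function.comp_def] using hS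

theorem lintegral_Ioo_neg_log_mul_rpow {s : ℝ} (hs : -1 < s) :
    ∫⁻ x in Ioo 0 1, ENNReal.ofReal (-log x * x ^ s) = ENNReal.ofReal (1 / (s + 1) ^ 2) := by
  have hr : 0 < s + 1 := by linarith
  -- `x = exp (-t)` turns the integral into `∫₀^∞ t e^{-(s+1)t} dt = Γ(2) / (s+1)²`.
  have hGamma := integral_rpow_mul_exp_neg_mul_Ioi two_pos hr
  rw [Gamma_two, mul_one, rpow_two, one_div_pow] at hGamma
  have himage : (fun t : ℝ => exp (-t)) '' Ioi 0 = Ioo 0 1 := by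
    rw [show (fun t : ℝ => exp (-t)) = exp ∘ Neg.neg from rfl, image_comp]
    simp [image_exp_Iio]
  have hderiv : ∀ t ∈ Ioi (0 : ℝ), HasDerivWithinAt (fun t => exp (-t)) (-exp (-t)) (Ioi 0) t :=
    fun t _ => by simpa using (hasDerivAt_neg t).exp.hasDerivWithinAt
  rw [← himage, lintegral_image_eq_lintegral_abs_deriv_mul measurableSet_Ioi hderiv
      (exp_injective.comp neg_injective).injOn, ← hGamma,
    ofReal_integral_eq_lintegral_ofReal (.of_integral_ne_zero (by rw [hGamma]; positivity))
      (ae_restrict_of_forall_mem measurableSet_Ioi fun t (ht : 0 < t) => by positivity)]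
  refine setLIntegral_congr_fun measurableSet_Ioi fun t ht => ?_
  rw [← ENNReal.ofReal_mul (abs_nonneg _), abs_neg, abs_of_pos (exp_pos _), log_exp, neg_neg,
    ← exp_mul, show (2 : ℝ) - 1 = 1 by norm_num, rpow_one, mul_left_comm, ← exp_add]
  ring_nf

theorem hasSum_neg_log_mul_rpow_two_mul {x : ℝ} (hx : x ∈ Ioo 0 1) :
    HasSum (fun n : ℕ => -log x * x ^ (2 * (n : ℝ))) (log x / (x ^ 2 - 1)) := by
  have hgeom := (hasSum_geometric_of_lt_one (sq_nonneg x) (by nlinarith [hx.1, hx.2])).mul_left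
    (-log x)
  have hterm : (fun n : ℕ => -log x * x ^ (2 * (n : ℝ))) = fun n => -log x * (x ^ 2) ^ n := by
    ext n
    rw [← pow_mul, ← rpow_natCast]
    push_cast
    rfl
  rwa [hterm, div_eq_mul_inv, ← neg_sub, inv_neg, mul_neg, ← neg_mul]

theorem lintegral_Ioo_log_div_sq_sub_one :
    ∫⁻ x in Ioo 0 1, ENNReal.ofReal (log x / (x ^ 2 - 1)) = ENNReal.ofReal (π ^ 2 / 8) := by
  have hterm_nonneg : ∀ x ∈ Ioo (0 : ℝ) 1, ∀ n : ℕ, 0 ≤ -log x * x ^ (2 * (n : ℝ)) :=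
    fun x hx n => mul_nonneg (neg_nonneg.mpr (log_nonpos hx.1.le hx.2.le)) (rpow_nonneg hx.1.le _)
  calc ∫⁻ x in Ioo 0 1, ENNReal.ofReal (log x / (x ^ 2 - 1))
      = ∫⁻ x in Ioo 0 1, ∑' n : ℕ, ENNReal.ofReal (-log x * x ^ (2 * (n : ℝ))) :=
        setLIntegral_congr_fun measurableSet_Ioo fun x hx => by
          rw [← (hasSum_neg_log_mul_rpow_two_mul hx).tsum_eq,
            ENNReal.ofReal_tsum_of_nonneg (hterm_nonneg x hx)
              (hasSum_neg_log_mul_rpow_two_mul hx).summable]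
    _ = ∑' n : ℕ, ENNReal.ofReal (1 / (2 * (n : ℝ) + 1) ^ 2) := by
        rw [lintegral_tsum fun n => by fun_prop]
        congr 1 with n
        exact lintegral_Ioo_neg_log_mul_rpow (neg_one_lt_zero.trans_le (by positivity))
    _ = ENNReal.ofReal (π ^ 2 / 8) := by
        rw [← ENNReal.ofReal_tsum_of_nonneg (fun n => by positivity) hasSum_one_div_odd_sq.summable,
          hasSum_one_div_odd_sq.tsum_eq]

theorem lintegral_Ioi_one_eq_lintegral_Ioo_inv (g : ℝ → ℝ≥0∞) :
    ∫⁻ x in Ioi 1, g x = ∫⁻ x in Ioo 0 1, ENNReal.ofReal (x ^ 2)⁻¹ * g x⁻¹ := by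
  have himage : (Inv.inv : ℝ → ℝ) '' Ioo 0 1 = Ioi 1 := by
    rw [image_inv_eq_inv, inv_Ioo_0_left one_pos, inv_one]
  rw [← himage, lintegral_image_eq_lintegral_abs_deriv_mul measurableSet_Ioo
    (fun x hx => (hasDerivAt_inv hx.1.ne').hasDerivWithinAt) inv_injective.injOn]
  refine setLIntegral_congr_fun measurableSet_Ioo fun x _ => ?_
  rw [abs_neg, abs_of_nonneg (by positivity)]

theorem inv_sq_mul_log_inv_div_inv_sq_sub_one (x : ℝ) :
    (x ^ 2)⁻¹ * (log x⁻¹ / (x⁻¹ ^ 2 - 1)) = log x / (x ^ 2 - 1) := by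
  rcases eq_or_ne x 0 with rfl | hx
  · simp
  rw [log_inv, inv_mul_eq_div, div_div, inv_pow, sub_mul, inv_mul_cancel₀ (by positivity),
    ← neg_sub, div_neg, neg_div, one_mul, neg_neg]

theorem lintegral_Ioi_log_div_sq_sub_one :
    ∫⁻ x in Ioi 0, ENNReal.ofReal (log x / (x ^ 2 - 1)) = ENNReal.ofReal (π ^ 2 / 4) := by
  have hsymm : ∫⁻ x in Ioi 1, ENNReal.ofReal (log x / (x ^ 2 - 1)) =
      ∫⁻ x in Ioo 0 1, ENNReal.ofReal (log x / (x ^ 2 - 1)) := by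
    rw [lintegral_Ioi_one_eq_lintegral_Ioo_inv]
    refine setLIntegral_congr_fun measurableSet_Ioo fun x _ => ?_
    rw [← ENNReal.ofReal_mul (by positivity), inv_sq_mul_log_inv_div_inv_sq_sub_one]
  rw [← Ioc_union_Ioi_eq_Ioi zero_le_one, lintegral_union measurableSet_Ioi Ioc_disjoint_Ioi_same,
    setLIntegral_congr Ioo_ae_eq_Ioc.symm, hsymm, lintegral_Ioo_log_div_sq_sub_one,
    ← ENNReal.ofReal_add (by positivity) (by positivity)]
  ring_nf

theorem sunset_integral_at_pseudothreshold :
    ∫ p in (Ioi (0 : ℝ) ×ˢ Ioi (0 : ℝ)),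
      1 / ((p.1 + 1) * (p.2 + 1) * (p.1 + p.2)) = π ^ 2 / 4 := by
  have hnonneg : 0 ≤ᵐ[volume.restrict (Ioi (0 : ℝ) ×ˢ Ioi (0 : ℝ))]
      fun p : ℝ × ℝ => 1 / ((p.1 + 1) * (p.2 + 1) * (p.1 + p.2)) :=
    ae_restrict_of_forall_mem (measurableSet_Ioi.prod measurableSet_Ioi)
      fun p ⟨(h₁ : 0 < p.1), (h₂ : 0 < p.2)⟩ => by positivity
  have hinner : ∀ᵐ x ∂volume.restrict (Ioi (0 : ℝ)),
      ∫⁻ y in Ioi 0, ENNReal.ofReal (1 / ((x + 1) * (y + 1) * (x + y))) =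
        ENNReal.ofReal (log x / (x ^ 2 - 1)) := by
    -- At `x = 1` the right side is the junk value `log 1 / 0 = 0`, not `1/2`.
    filter_upwards [ae_restrict_mem measurableSet_Ioi, Measure.ae_ne _ 1] with x hx hx1
    exact lintegral_Ioi_sunset_inner hx hx1
  rw [integral_eq_lintegral_of_nonneg_ae hnonneg
      (Measurable.aestronglyMeasurable (by fun_prop)), Measure.volume_eq_prod,
    ← Measure.prod_restrict, lintegral_prod _ (by fun_prop), lintegral_congr_ae hinner,
    lintegral_Ioi_log_div_sq_sub_one, ENNReal.toReal_ofReal (by positivity)]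
end

section
/- On the elliptic curve E_t in Weierstrass form ζ²η = σ(tη² + ((t−3)² − 12)/4 · ση + σ²) with identity O = (0:1:0), the point P₃ = (1 : (t−1)/2 : 1) has order dividing 3, i.e. 3·P₃ = O, for every parameter t for which the curve is smooth. -/
/-!
`P₃` is a flex of the sunset curve: the tangent there has slope `(t − 3)/2` and meets the curve
in no point other than `P₃`, so the doubling formula gives `x(2P₃) = x(P₃)`, hence `2P₃ = −P₃`.
-/

open WeierstrassCurve

/-- The sunset elliptic curve `ζ²η = σ(tη² + ((t−3)²−12)/4·ση + σ²)` in the affine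
chart `η = 1`, i.e. `y² = x³ + ((t−3)²−12)/4·x² + t·x`. -/
noncomputable def sunsetCurve (t : ℝ) : WeierstrassCurve.Affine ℝ :=
  { a₁ := 0, a₂ := ((t - 3) ^ 2 - 12) / 4, a₃ := 0, a₄ := t, a₆ := 0 }

/-- The point `P₃ = (1, (t−1)/2)` lies on the sunset curve. -/
theorem sunset_P3_equation (t : ℝ) : (sunsetCurve t).Equation 1 ((t - 1) / 2) := by
  simp only [sunsetCurve, WeierstrassCurve.Affine.equation_iff]; ring

namespace WeierstrassCurve.Affine

variable {F : Type*} [Field F] [DecidableEq F] {W : Affine F} {x y : F}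

theorem Point.some_add_self_eq_neg_of_addX_eq (h : W.Nonsingular x y) (hy : y ≠ W.negY x y)
    (hx : W.addX x x (W.slope x x y y) = x) :
    Point.some x y h + Point.some x y h = -Point.some x y h := by
  rw [Point.add_self_of_Y_ne hy, Point.neg_some, Point.some.injEq]
  refine ⟨hx, ?_⟩
  rw [addY, negAddY, hx, sub_self, mul_zero, zero_add]

theorem Point.three_zsmul_some_eq_zero_of_addX_eq (h : W.Nonsingular x y) (hy : y ≠ W.negY x y)
    (hx : W.addX x x (W.slope x x y y) = x) : (3 : ℤ) • Point.some x y h = 0 := by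
  rw [show (3 : ℤ) • Point.some x y h = Point.some x y h + (Point.some x y h + Point.some x y h)
    by abel, some_add_self_eq_neg_of_addX_eq h hy hx, add_neg_cancel]

end WeierstrassCurve.Affine

theorem sunsetCurve_Δ (t : ℝ) : (sunsetCurve t).Δ = t ^ 2 * (t - 1) ^ 3 * (t - 9) := by
  simp only [sunsetCurve, Δ, b₂, b₄, b₆, b₈]
  ring

theorem sunsetCurve_negY_P3 (t : ℝ) : (sunsetCurve t).negY 1 ((t - 1) / 2) = -((t - 1) / 2) := by
  simp only [sunsetCurve, Affine.negY]
  ring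

theorem sunsetCurve_P3_Y_ne_negY {t : ℝ} (ht : t ≠ 1) :
    (t - 1) / 2 ≠ (sunsetCurve t).negY 1 ((t - 1) / 2) := by
  rw [sunsetCurve_negY_P3]
  intro h
  exact ht (by linarith)

theorem sunsetCurve_slope_P3 {t : ℝ} (ht : t ≠ 1) :
    (sunsetCurve t).slope 1 1 ((t - 1) / 2) ((t - 1) / 2) = (t - 3) / 2 := by
  rw [Affine.slope_of_Y_ne rfl (sunsetCurve_P3_Y_ne_negY ht), sunsetCurve_negY_P3]
  simp only [sunsetCurve]
  field_simp [sub_ne_zero.mpr ht]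
  ring

theorem sunsetCurve_addX_tangent_P3 (t : ℝ) : (sunsetCurve t).addX 1 1 ((t - 3) / 2) = 1 := by
  simp only [sunsetCurve, Affine.addX]
  ring

theorem sunset_P3_three_torsion (t : ℝ) (hΔ : (sunsetCurve t).Δ ≠ 0) :
    (3 : ℤ) • (WeierstrassCurve.Affine.Point.some _ _
        ((WeierstrassCurve.Affine.equation_iff_nonsingular_of_Δ_ne_zero (W := sunsetCurve t) hΔ).mp
          (sunset_P3_equation t)))
      = (0 : (sunsetCurve t).Point) := by
  have ht : t ≠ 1 := by
    rintro rfl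
    exact hΔ (by rw [sunsetCurve_Δ]; ring)
  apply Affine.Point.three_zsmul_some_eq_zero_of_addX_eq _ (sunsetCurve_P3_Y_ne_negY ht)
  rw [sunsetCurve_slope_P3 ht, sunsetCurve_addX_tangent_P3]
end

section
/- For all n ≥ 0, I_n := ∫₀^∞ ∫₀^∞ ((1+x+y)(1+1/x+1/y))^{−n−1} dx dy/(xy) = (1/(4^{n−1} n!²)) ∫₀^∞ x^{2n+1} K₀(x)³ dx, where K₀ is the modified Bessel function of the second kind. -/
/-!
Schwinger parametrisation `A⁻ⁿ⁻¹ = (1/n!) ∫₀^∞ uⁿ e^{-uA} du`, applied to both factors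
`1 + x + y` and `1 + 1/x + 1/y`, makes the `x`- and `y`-integrals separate. Each of them is
`∫₀^∞ e^{-(ux + v/x)} dx/x = 2 K₀(2√(uv))`, by `x = √(v/u) eʷ`. Substituting `v = s²/(4u)`
and integrating out `u`, the remaining `∫₀^∞ e^{-u - s²/(4u)} du/u` is a third factor `2 K₀(s)`.
Everything is computed with lower Lebesgue integrals, where Tonelli needs no integrability;
the Bochner integrals are recovered at the end because both integrands are nonnegative.
-/

open MeasureTheory Set Real

/-- The modified Bessel function of the second kind of order `0`, via
`K₀(m) = ∫₀^∞ e^{−m cosh u} du`. -/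
noncomputable def besselK0 (m : ℝ) : ℝ :=
  ∫ u in Ioi (0 : ℝ), Real.exp (-m * Real.cosh u)

open scoped ENNReal Nat

lemma sq_div_four_le_cosh (x : ℝ) : x ^ 2 / 4 ≤ cosh x := by
  rw [← cosh_abs, cosh_eq, ← sq_abs]
  nlinarith [quadratic_le_exp_of_nonneg (abs_nonneg x), add_one_le_exp (-|x|)]

lemma integrable_exp_neg_mul_cosh {m : ℝ} (hm : 0 < m) :
    Integrable fun u => exp (-m * cosh u) := by
  refine (integrable_exp_neg_mul_sq (by positivity : 0 < m / 4)).mono' (by fun_prop)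
    (ae_of_all _ fun u => ?_)
  rw [norm_of_nonneg (exp_pos _).le, exp_le_exp]
  nlinarith [sq_div_four_le_cosh u]

lemma integral_exp_neg_mul_cosh (m : ℝ) : ∫ u, exp (-m * cosh u) = 2 * besselK0 m := by
  simpa only [cosh_abs, besselK0] using integral_comp_abs (f := fun u => exp (-m * cosh u))

lemma lintegral_exp_neg_mul_cosh {m : ℝ} (hm : 0 < m) :
    ∫⁻ u, ENNReal.ofReal (exp (-m * cosh u)) = ENNReal.ofReal (2 * besselK0 m) := by
  rw [← integral_exp_neg_mul_cosh, ofReal_integral_eq_lintegral_ofReal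
    (integrable_exp_neg_mul_cosh hm) (ae_of_all _ fun _ => (exp_pos _).le)]

lemma besselK0_nonneg (m : ℝ) : 0 ≤ besselK0 m :=
  setIntegral_nonneg measurableSet_Ioi fun _ _ => (exp_pos _).le

@[fun_prop]
lemma measurable_besselK0 : Measurable besselK0 :=
  (StronglyMeasurable.integral_prod_right' (f := fun p : ℝ × ℝ => exp (-p.1 * cosh p.2))
    (by fun_prop)).measurable

lemma lintegral_pow_mul_exp_neg_mul (n : ℕ) {a : ℝ} (ha : 0 < a) :
    ∫⁻ t in Ioi 0, ENNReal.ofReal (t ^ n * exp (-(a * t)))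
      = ENNReal.ofReal (n ! / a ^ (n + 1)) := by
  have hval : ∫ t in Ioi 0, t ^ n * exp (-(a * t)) = n ! / a ^ (n + 1) := by
    have h := integral_rpow_mul_exp_neg_mul_Ioi (a := n + 1) (by positivity) ha
    rw [add_sub_cancel_right, Gamma_nat_eq_factorial, ← Nat.cast_add_one, rpow_natCast] at h
    simp only [rpow_natCast] at h
    rw [h, one_div, inv_pow]
    ring
  rw [← hval, ofReal_integral_eq_lintegral_ofReal]
  · exact Integrable.of_integral_ne_zero (by rw [hval]; positivity)
  · filter_upwards [ae_restrict_mem measurableSet_Ioi] with t (ht : 0 < t)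
    positivity

lemma lintegral_Ioi_eq_lintegral_comp_mul_sq {c : ℝ} (hc : 0 < c) (g : ℝ → ℝ≥0∞) :
    ∫⁻ v in Ioi 0, g v = ∫⁻ s in Ioi 0, ENNReal.ofReal (2 * c * s) * g (c * s ^ 2) := by
  have himage : (fun s => c * s ^ 2) '' Ioi 0 = Ioi 0 := by
    ext v
    refine ⟨fun ⟨s, hs, hv⟩ => hv ▸ mul_pos hc (pow_pos hs 2), fun hv => ?_⟩
    refine ⟨√(v / c), sqrt_pos.2 (div_pos hv hc), ?_⟩
    simp only [sq_sqrt (div_pos hv hc).le]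
    field_simp
  have hinj : InjOn (fun s => c * s ^ 2) (Ioi 0) := fun s hs t ht h =>
    (pow_left_inj₀ (le_of_lt hs) (le_of_lt ht) two_ne_zero).1 (mul_left_cancel₀ hc.ne' h)
  have hderiv :
      ∀ s ∈ Ioi (0 : ℝ), HasDerivWithinAt (fun s => c * s ^ 2) (2 * c * s) (Ioi 0) s :=
    fun s _ => ((hasDerivAt_pow 2 s).const_mul c).hasDerivWithinAt.congr_deriv (by ring)
  conv_lhs => rw [← himage]
  rw [lintegral_image_eq_lintegral_abs_deriv_mul measurableSet_Ioi hderiv hinj]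
  refine setLIntegral_congr_fun measurableSet_Ioi fun s (hs : 0 < s) => ?_
  rw [abs_of_pos (by positivity)]

lemma lintegral_exp_neg_mul_add_div_div {a b : ℝ} (ha : 0 < a) (hb : 0 < b) :
    ∫⁻ x in Ioi 0, ENNReal.ofReal (exp (-(a * x + b / x)) / x)
      = ENNReal.ofReal (2 * besselK0 (2 * √(a * b))) := by
  set c := √b / √a with hc_def
  have hc : 0 < c := by positivity
  have himage : (fun w => c * exp w) '' univ = Ioi 0 := by
    ext x
    refine ⟨fun ⟨w, _, hx⟩ => hx ▸ mul_pos hc (exp_pos w), fun hx => ?_⟩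
    refine ⟨log (x / c), trivial, ?_⟩
    simp only [exp_log (div_pos hx hc)]
    field_simp
  have hinj : InjOn (fun w => c * exp w) univ := fun w _ v _ h =>
    exp_injective (mul_left_cancel₀ hc.ne' h)
  rw [← himage, lintegral_image_eq_lintegral_abs_deriv_mul MeasurableSet.univ
    (fun w _ => ((hasDerivAt_exp w).const_mul c).hasDerivWithinAt) hinj,
    Measure.restrict_univ, ← lintegral_exp_neg_mul_cosh (by positivity)]
  refine lintegral_congr fun w => ?_
  have hcw : 0 < c * exp w := mul_pos hc (exp_pos w)
  rw [abs_of_pos hcw, ← ENNReal.ofReal_mul hcw.le, mul_div_cancel₀ _ hcw.ne']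
  congr 3
  rw [sqrt_mul ha.le, cosh_eq, exp_neg, hc_def]
  field_simp
  simp only [sq_sqrt ha.le, sq_sqrt hb.le]
  ring

lemma volume_restrict_Ioi_prod_Ioi :
    (volume : Measure (ℝ × ℝ)).restrict (Ioi 0 ×ˢ Ioi 0)
      = (volume.restrict (Ioi (0 : ℝ))).prod (volume.restrict (Ioi 0)) := by
  rw [Measure.volume_eq_prod, Measure.prod_restrict]

-- The density of `2√(UV)`, for independent standard exponential `U` and `V`, is `s K₀(s)`.
lemma lintegral_exp_neg_add_mul_comp_two_sqrt_mul {g : ℝ → ℝ≥0∞} (hg : Measurable g) :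
    ∫⁻ q in Ioi 0 ×ˢ Ioi 0, ENNReal.ofReal (exp (-(q.1 + q.2))) * g (2 * √(q.1 * q.2))
      = ∫⁻ s in Ioi 0, ENNReal.ofReal (s * besselK0 s) * g s := by
  rw [volume_restrict_Ioi_prod_Ioi, lintegral_prod _ (by fun_prop)]
  calc ∫⁻ u in Ioi 0, ∫⁻ v in Ioi 0, ENNReal.ofReal (exp (-(u + v))) * g (2 * √(u * v))
      = ∫⁻ u in Ioi 0, ∫⁻ s in Ioi 0,
          ENNReal.ofReal (exp (-(1 * u + s ^ 2 / 4 / u)) / u) *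
            (ENNReal.ofReal (s / 2) * g s) := by
        refine setLIntegral_congr_fun measurableSet_Ioi fun u (hu : 0 < u) => ?_
        rw [lintegral_Ioi_eq_lintegral_comp_mul_sq (c := (4 * u)⁻¹) (by positivity)]
        refine setLIntegral_congr_fun measurableSet_Ioi fun s (hs : 0 < s) => ?_
        have hsqrt : 2 * √(u * ((4 * u)⁻¹ * s ^ 2)) = s := by
          rw [show u * ((4 * u)⁻¹ * s ^ 2) = (s / 2) ^ 2 by field_simp; ring,
            sqrt_sq (by positivity)]
          ring
        rw [hsqrt, ← mul_assoc, ← mul_assoc, ← ENNReal.ofReal_mul (by positivity),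
          ← ENNReal.ofReal_mul (by positivity)]
        congr 2
        rw [show -(u + (4 * u)⁻¹ * s ^ 2) = -(1 * u + s ^ 2 / 4 / u) by field_simp]
        field_simp
        norm_num
    _ = ∫⁻ s in Ioi 0, ∫⁻ u in Ioi 0,
          ENNReal.ofReal (exp (-(1 * u + s ^ 2 / 4 / u)) / u) *
            (ENNReal.ofReal (s / 2) * g s) :=
        lintegral_lintegral_swap (by fun_prop)
    _ = ∫⁻ s in Ioi 0, ENNReal.ofReal (s * besselK0 s) * g s := by
        refine setLIntegral_congr_fun measurableSet_Ioi fun s (hs : 0 < s) => ?_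
        have hsqrt : 2 * √(1 * (s ^ 2 / 4)) = s := by
          rw [show 1 * (s ^ 2 / 4) = (s / 2) ^ 2 by ring, sqrt_sq (by positivity)]
          ring
        rw [lintegral_mul_const _ (by fun_prop),
          lintegral_exp_neg_mul_add_div_div one_pos (by positivity), hsqrt, ← mul_assoc,
          ← ENNReal.ofReal_mul (by have := besselK0_nonneg s; positivity)]
        ring_nf

noncomputable def sunsetIntegrand (n : ℕ) (p : ℝ × ℝ) : ℝ :=
  ((1 + p.1 + p.2) * (1 + 1 / p.1 + 1 / p.2)) ^ (-(n : ℤ) - 1) / (p.1 * p.2)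

noncomputable def schwingerIntegrand (n : ℕ) (q p : ℝ × ℝ) : ℝ :=
  (q.1 * q.2) ^ n * exp (-(q.1 + q.2)) *
    (exp (-(q.1 * p.1 + q.2 / p.1)) / p.1 * (exp (-(q.1 * p.2 + q.2 / p.2)) / p.2))

lemma ofReal_sunsetIntegrand_eq_lintegral_schwingerIntegrand (n : ℕ) {p : ℝ × ℝ}
    (hp : p ∈ Ioi 0 ×ˢ Ioi 0) :
    ENNReal.ofReal (sunsetIntegrand n p)
      = ENNReal.ofReal ((n ! ^ 2 : ℝ)⁻¹) *
          ∫⁻ q in Ioi 0 ×ˢ Ioi 0, ENNReal.ofReal (schwingerIntegrand n q p) := by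
  obtain ⟨hx : 0 < p.1, hy : 0 < p.2⟩ := hp
  set A := 1 + p.1 + p.2 with hA
  set B := 1 + 1 / p.1 + 1 / p.2 with hB
  have hsplit : ∀ q ∈ Ioi (0 : ℝ) ×ˢ Ioi 0, ENNReal.ofReal (schwingerIntegrand n q p)
      = ENNReal.ofReal (q.1 ^ n * exp (-(A * q.1))) *
          ENNReal.ofReal (q.2 ^ n * exp (-(B * q.2))) * ENNReal.ofReal (p.1 * p.2)⁻¹ := by
    rintro q ⟨hu : 0 < q.1, hv : 0 < q.2⟩
    rw [← ENNReal.ofReal_mul (by positivity), ← ENNReal.ofReal_mul (by positivity),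
      schwingerIntegrand, mul_pow]
    congr 1
    have hexp : exp (-(A * q.1)) * exp (-(B * q.2)) = exp (-(q.1 + q.2)) *
        (exp (-(q.1 * p.1 + q.2 / p.1)) * exp (-(q.1 * p.2 + q.2 / p.2))) := by
      rw [← exp_add, ← exp_add, ← exp_add, hA, hB]
      congr 1
      field_simp
      ring
    linear_combination -(q.1 ^ n * q.2 ^ n * (p.1 * p.2)⁻¹) * hexp
  rw [setLIntegral_congr_fun (measurableSet_Ioi.prod measurableSet_Ioi) hsplit,
    lintegral_mul_const' _ _ ENNReal.ofReal_ne_top, volume_restrict_Ioi_prod_Ioi,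
    lintegral_prod_mul (f := fun u => ENNReal.ofReal (u ^ n * exp (-(A * u))))
      (g := fun v => ENNReal.ofReal (v ^ n * exp (-(B * v)))) (by fun_prop) (by fun_prop),
    lintegral_pow_mul_exp_neg_mul n (by positivity),
    lintegral_pow_mul_exp_neg_mul n (by positivity), ← ENNReal.ofReal_mul (by positivity),
    ← ENNReal.ofReal_mul (by positivity), ← ENNReal.ofReal_mul (by positivity)]
  congr 1
  rw [sunsetIntegrand, show -(n : ℤ) - 1 = -((n + 1 : ℕ) : ℤ) by push_cast; ring, zpow_neg,
    zpow_natCast, mul_pow, hA, hB]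
  field_simp

lemma lintegral_schwingerIntegrand_right (n : ℕ) {q : ℝ × ℝ} (hq : q ∈ Ioi 0 ×ˢ Ioi 0) :
    ∫⁻ p in Ioi 0 ×ˢ Ioi 0, ENNReal.ofReal (schwingerIntegrand n q p)
      = ENNReal.ofReal (exp (-(q.1 + q.2))) *
          ENNReal.ofReal ((q.1 * q.2) ^ n * (2 * besselK0 (2 * √(q.1 * q.2))) ^ 2) := by
  obtain ⟨hu : 0 < q.1, hv : 0 < q.2⟩ := hq
  have hsplit : ∀ p ∈ Ioi (0 : ℝ) ×ˢ Ioi 0, ENNReal.ofReal (schwingerIntegrand n q p)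
      = ENNReal.ofReal ((q.1 * q.2) ^ n * exp (-(q.1 + q.2))) *
        (ENNReal.ofReal (exp (-(q.1 * p.1 + q.2 / p.1)) / p.1) *
          ENNReal.ofReal (exp (-(q.1 * p.2 + q.2 / p.2)) / p.2)) := by
    rintro p ⟨hx : 0 < p.1, hy : 0 < p.2⟩
    rw [← ENNReal.ofReal_mul (by positivity), ← ENNReal.ofReal_mul (by positivity),
      schwingerIntegrand]
  rw [setLIntegral_congr_fun (measurableSet_Ioi.prod measurableSet_Ioi) hsplit,
    lintegral_const_mul' _ _ ENNReal.ofReal_ne_top, volume_restrict_Ioi_prod_Ioi,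
    lintegral_prod_mul (f := fun x => ENNReal.ofReal (exp (-(q.1 * x + q.2 / x)) / x))
      (g := fun y => ENNReal.ofReal (exp (-(q.1 * y + q.2 / y)) / y))
      (by fun_prop) (by fun_prop),
    lintegral_exp_neg_mul_add_div_div hu hv,
    ← ENNReal.ofReal_mul (by have := besselK0_nonneg (2 * √(q.1 * q.2)); positivity),
    ← ENNReal.ofReal_mul (by positivity), ← ENNReal.ofReal_mul (by positivity)]
  congr 1
  ring

lemma lintegral_sunsetIntegrand (n : ℕ) :
    ∫⁻ p in Ioi 0 ×ˢ Ioi 0, ENNReal.ofReal (sunsetIntegrand n p)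
      = ENNReal.ofReal (4 / (4 ^ n * n ! ^ 2)) *
          ∫⁻ s in Ioi 0, ENNReal.ofReal (s ^ (2 * n + 1) * besselK0 s ^ 3) := by
  have hS : MeasurableSet (Ioi (0 : ℝ) ×ˢ Ioi (0 : ℝ)) :=
    measurableSet_Ioi.prod measurableSet_Ioi
  calc ∫⁻ p in Ioi 0 ×ˢ Ioi 0, ENNReal.ofReal (sunsetIntegrand n p)
      = ∫⁻ p in Ioi 0 ×ˢ Ioi 0, ENNReal.ofReal ((n ! ^ 2 : ℝ)⁻¹) *
          ∫⁻ q in Ioi 0 ×ˢ Ioi 0, ENNReal.ofReal (schwingerIntegrand n q p) :=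
        setLIntegral_congr_fun hS fun p hp =>
          ofReal_sunsetIntegrand_eq_lintegral_schwingerIntegrand n hp
    _ = ENNReal.ofReal ((n ! ^ 2 : ℝ)⁻¹) * ∫⁻ q in Ioi 0 ×ˢ Ioi 0,
          ∫⁻ p in Ioi 0 ×ˢ Ioi 0, ENNReal.ofReal (schwingerIntegrand n q p) := by
        rw [lintegral_const_mul' _ _ ENNReal.ofReal_ne_top,
          lintegral_lintegral_swap (by unfold schwingerIntegrand; fun_prop)]
    _ = ENNReal.ofReal ((n ! ^ 2 : ℝ)⁻¹) * ∫⁻ q in Ioi 0 ×ˢ Ioi 0,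
          ENNReal.ofReal (exp (-(q.1 + q.2))) *
            ENNReal.ofReal (((2 * √(q.1 * q.2)) ^ 2 / 4) ^ n *
              (2 * besselK0 (2 * √(q.1 * q.2))) ^ 2) := by
        congr 1
        refine setLIntegral_congr_fun hS fun q hq => ?_
        have hsq : (2 * √(q.1 * q.2)) ^ 2 / 4 = q.1 * q.2 := by
          rw [mul_pow, sq_sqrt (mul_pos hq.1 hq.2).le]
          ring
        rw [lintegral_schwingerIntegrand_right n hq, hsq]
    _ = ENNReal.ofReal ((n ! ^ 2 : ℝ)⁻¹) * ∫⁻ s in Ioi 0,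
          ENNReal.ofReal (s * besselK0 s) *
            ENNReal.ofReal ((s ^ 2 / 4) ^ n * (2 * besselK0 s) ^ 2) := by
        rw [lintegral_exp_neg_add_mul_comp_two_sqrt_mul
          (g := fun s => ENNReal.ofReal ((s ^ 2 / 4) ^ n * (2 * besselK0 s) ^ 2))
          (by fun_prop)]
    _ = ENNReal.ofReal (4 / (4 ^ n * n ! ^ 2)) *
          ∫⁻ s in Ioi 0, ENNReal.ofReal (s ^ (2 * n + 1) * besselK0 s ^ 3) := by
        rw [← lintegral_const_mul' _ _ ENNReal.ofReal_ne_top,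
          ← lintegral_const_mul' _ _ ENNReal.ofReal_ne_top]
        refine setLIntegral_congr_fun measurableSet_Ioi fun s (hs : 0 < s) => ?_
        have := besselK0_nonneg s
        rw [← ENNReal.ofReal_mul (by positivity), ← ENNReal.ofReal_mul (by positivity),
          ← ENNReal.ofReal_mul (by positivity)]
        congr 1
        rw [div_pow]
        field_simp
        ring

theorem sunsetMoment_eq_bessel_moment (n : ℕ) :
    ∫ p in (Ioi (0 : ℝ) ×ˢ Ioi (0 : ℝ)),
        ((1 + p.1 + p.2) * (1 + 1/p.1 + 1/p.2)) ^ (-(n : ℤ) - 1) / (p.1 * p.2)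
      = (1 / ((4 : ℝ) ^ ((n : ℤ) - 1) * (n.factorial : ℝ) ^ 2)) *
          ∫ x in Ioi (0 : ℝ), x ^ (2 * n + 1) * besselK0 x ^ 3 := by
  have hS : MeasurableSet (Ioi (0 : ℝ) ×ˢ Ioi (0 : ℝ)) :=
    measurableSet_Ioi.prod measurableSet_Ioi
  have hconst : 1 / ((4 : ℝ) ^ ((n : ℤ) - 1) * n ! ^ 2) = 4 / (4 ^ n * n ! ^ 2) := by
    rw [zpow_sub₀ four_ne_zero, zpow_natCast, zpow_one]
    field_simp
  change ∫ p in Ioi 0 ×ˢ Ioi 0, sunsetIntegrand n p = _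
  rw [integral_eq_lintegral_of_nonneg_ae, integral_eq_lintegral_of_nonneg_ae,
    lintegral_sunsetIntegrand, ENNReal.toReal_mul, ENNReal.toReal_ofReal (by positivity), hconst]
  · filter_upwards [ae_restrict_mem measurableSet_Ioi] with s (hs : 0 < s)
    have := besselK0_nonneg s
    positivity
  · exact (by fun_prop : Measurable fun s => s ^ (2 * n + 1) * besselK0 s ^ 3)
      |>.aestronglyMeasurable
  · filter_upwards [ae_restrict_mem hS] with p hp
    obtain ⟨hx : 0 < p.1, hy : 0 < p.2⟩ := hp
    unfold sunsetIntegrand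
    positivity
  · exact (by unfold sunsetIntegrand; fun_prop : Measurable (sunsetIntegrand n))
      |>.aestronglyMeasurable
end

section
/- Let ζ(s,a) = Σ_{n≥0} (n+a)^{−s} be the Hurwitz zeta function. Then Σ_{a≥1, a≡1 mod 6} a^{−3} − Σ_{a≥1, a≡5 mod 6} a^{−3} = (1/6³)(ζ(3, 1/6) − ζ(3, 5/6)) = π³/(18√3). -/
/-!
The Fourier expansion of the Bernoulli polynomial `B₃` gives
`∑ sin (2πnx) / n³ = π³ x (1 - x) (1 - 2x) / 3` on `[0, 1]`. Since
`sin (πn/3) + sin (2πn/3) = √3 χ(n)` for the odd character `χ = oddCharModSix` mod 6, adding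
the expansions at `x = 1/6` and `x = 1/3` yields `L(3, χ) = π³ / (18√3)`. Splitting the
`L`-series along the residue classes `1` and `5` mod 6 turns it into the difference of the two
sums, and `∑ (6n + c)⁻³ = 6⁻³ ζ(3, c/6)`.
-/

open Real

/-- The Hurwitz zeta function `ζ(s,a) = Σ_{n≥0} (n+a)^{−s}` for real `s`, `a > 0`. -/
noncomputable def hurwitz (s a : ℝ) : ℝ := ∑' n : ℕ, ((n : ℝ) + a) ^ (-s)

theorem Polynomial.eval_map_bernoulli_three (x : ℝ) :
    ((bernoulli 3).map (algebraMap ℚ ℝ)).eval x = x ^ 3 - 3 / 2 * x ^ 2 + 1 / 2 * x := by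
  simp only [Polynomial.bernoulli, Finset.sum_range_succ, Finset.sum_range_zero,
    Polynomial.map_add, map_monomial, eval_add, eval_monomial]
  norm_num [bernoulli_eq_bernoulli'_of_ne_one (by decide : 3 ≠ 1), bernoulli'_three]
  ring

open Set in
theorem hasSum_one_div_nat_pow_three_mul_sin {x : ℝ} (hx : x ∈ Icc 0 1) :
    HasSum (fun n : ℕ => 1 / (n : ℝ) ^ 3 * sin (2 * π * n * x))
      (π ^ 3 * x * (1 - x) * (1 - 2 * x) / 3) := by
  have h := hasSum_one_div_nat_pow_mul_sin (k := 1) one_ne_zero hx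
  rw [Polynomial.eval_map_bernoulli_three] at h
  convert h using 1
  rw [show Nat.factorial (2 * 1 + 1) = 6 from rfl]
  ring

theorem hasSum_one_div_mul_nat_add_pow {m c : ℝ} (hm : 0 < m) (hc : 0 ≤ c) {k : ℕ} (hk : 1 < k) :
    HasSum (fun n : ℕ => 1 / (m * n + c) ^ k) (1 / m ^ k * hurwitz k (c / m)) := by
  have hsum : Summable (fun n : ℕ => ((n : ℝ) + c / m) ^ (-(k : ℝ))) := by
    refine ((summable_one_div_nat_add_rpow (c / m) k).mpr (Nat.one_lt_cast.mpr hk)).congr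
      fun n => ?_
    rw [abs_of_nonneg (by positivity), rpow_neg (by positivity), one_div]
  have hterm (n : ℕ) : 1 / (m * n + c) ^ k = 1 / m ^ k * ((n : ℝ) + c / m) ^ (-(k : ℝ)) := by
    rw [rpow_neg (by positivity), rpow_natCast, ← one_div, div_mul_div_comm, one_mul, ← mul_pow,
      mul_add, mul_div_cancel₀ _ hm.ne']
  simp_rw [hterm]
  exact hsum.hasSum.mul_left _

theorem hasSum_ite_mod_eq_iff {α : Type*} [AddCommMonoid α] [TopologicalSpace α]
    {m c : ℕ} (hc : c < m) (f : ℕ → α) {a : α} :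
    HasSum (fun n => if n % m = c then f n else 0) a ↔ HasSum (fun k => f (m * k + c)) a := by
  have hinj : Function.Injective (fun k => m * k + c) := fun k l h => by
    simpa [((Nat.zero_le c).trans_lt hc).ne'] using h
  rw [← hinj.hasSum_iff]
  · congr! 2 with k
    simp [Nat.mod_eq_of_lt hc]
  · intro n hn
    exact if_neg fun h => hn ⟨n / m, by rw [← h]; exact Nat.div_add_mod n m⟩

def oddCharModSix (n : ℕ) : ℝ := if n % 6 = 1 then 1 else if n % 6 = 5 then -1 else 0

theorem oddCharModSix_mod (n : ℕ) : oddCharModSix (n % 6) = oddCharModSix n := by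
  simp only [oddCharModSix, Nat.mod_mod]

theorem sin_add_sin_two_mul_of_lt_six {r : ℕ} (hr : r < 6) :
    sin (π * r / 3) + sin (2 * (π * r / 3)) = √3 * oddCharModSix r := by
  rw [sin_two_mul, show ∀ s c : ℝ, s + 2 * s * c = s * (1 + 2 * c) by intros; ring]
  interval_cases r <;> norm_num [oddCharModSix]
  · rw [show π * 2 / 3 = π - π / 3 by ring, cos_pi_sub]; norm_num
  · rw [show π * 4 / 3 = π / 3 + π by ring, cos_add_pi]; norm_num
  · rw [show π * 5 / 3 = 2 * π - π / 3 by ring, sin_two_pi_sub, cos_two_pi_sub]; norm_num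

theorem sin_add_sin_eq_sqrt_three_mul_oddCharModSix (n : ℕ) :
    sin (2 * π * n * (1 / 6)) + sin (2 * π * n * (1 / 3)) = √3 * oddCharModSix n := by
  have hn : (n : ℝ) = (n % 6 : ℕ) + 6 * (n / 6 : ℕ) := by exact_mod_cast (Nat.mod_add_div n 6).symm
  rw [← oddCharModSix_mod, ← sin_add_sin_two_mul_of_lt_six (n.mod_lt (by norm_num)),
    show 2 * π * n * (1 / 6) = π * (n % 6 : ℕ) / 3 + (n / 6 : ℕ) * (2 * π) by rw [hn]; ring,
    show 2 * π * n * (1 / 3) = 2 * (π * (n % 6 : ℕ) / 3) + (2 * (n / 6) : ℕ) * (2 * π) by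
      rw [hn]; push_cast; ring,
    sin_add_nat_mul_two_pi, sin_add_nat_mul_two_pi]

theorem hasSum_oddCharModSix_div_pow_three :
    HasSum (fun n : ℕ => oddCharModSix n / (n : ℝ) ^ 3) (π ^ 3 / (18 * √3)) := by
  have h := ((hasSum_one_div_nat_pow_three_mul_sin (x := 1 / 6) (by norm_num)).add
    (hasSum_one_div_nat_pow_three_mul_sin (x := 1 / 3) (by norm_num))).div_const √3
  have hval : (π ^ 3 * (1 / 6) * (1 - 1 / 6) * (1 - 2 * (1 / 6)) / 3
      + π ^ 3 * (1 / 3) * (1 - 1 / 3) * (1 - 2 * (1 / 3)) / 3) / √3 = π ^ 3 / (18 * √3) := by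
    ring
  rw [hval] at h
  refine h.congr_fun fun n => ?_
  rw [← mul_add, sin_add_sin_eq_sqrt_three_mul_oddCharModSix]
  field_simp

theorem hasSum_oddCharModSix_div_pow_three_of {a b : ℝ}
    (h₁ : HasSum (fun k : ℕ => 1 / (6 * k + 1 : ℝ) ^ 3) a)
    (h₅ : HasSum (fun k : ℕ => 1 / (6 * k + 5 : ℝ) ^ 3) b) :
    HasSum (fun n : ℕ => oddCharModSix n / (n : ℝ) ^ 3) (a - b) := by
  have hclass (c : ℕ) (hc : c < 6) {s : ℝ} (h : HasSum (fun k : ℕ => 1 / (6 * k + c : ℝ) ^ 3) s) :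
      HasSum (fun n : ℕ => if n % 6 = c then 1 / (n : ℝ) ^ 3 else 0) s :=
    (hasSum_ite_mod_eq_iff hc _).mpr (by simpa using h)
  refine ((hclass 1 (by norm_num) (by simpa using h₁)).sub
    (hclass 5 (by norm_num) (by simpa using h₅))).congr_fun fun n => ?_
  unfold oddCharModSix
  split_ifs <;> first | omega | ring

theorem odd_character_L_three :
    (∑' n : ℕ, (1 : ℝ) / (6 * n + 1) ^ 3) - (∑' n : ℕ, (1 : ℝ) / (6 * n + 5) ^ 3)
        = (1 / 6 ^ 3) * (hurwitz 3 (1/6) - hurwitz 3 (5/6))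
      ∧ (∑' n : ℕ, (1 : ℝ) / (6 * n + 1) ^ 3) - (∑' n : ℕ, (1 : ℝ) / (6 * n + 5) ^ 3)
        = π ^ 3 / (18 * Real.sqrt 3) := by
  have h₁ := hasSum_one_div_mul_nat_add_pow (m := 6) (c := 1) (k := 3)
    (by norm_num) (by norm_num) (by norm_num)
  have h₅ := hasSum_one_div_mul_nat_add_pow (m := 6) (c := 5) (k := 3)
    (by norm_num) (by norm_num) (by norm_num)
  push_cast at h₁ h₅
  rw [h₁.tsum_eq, h₅.tsum_eq]
  exact ⟨by ring,
    (hasSum_oddCharModSix_div_pow_three_of h₁ h₅).unique hasSum_oddCharModSix_div_pow_three⟩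
end
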